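/- arXiv:1908.00001 — 4 statements merged into one kernel-verified Lean document; each statement's English description precedes it below -/
import Mathlib

section
/- Let a, b be real numbers with a > 0 and b > 0. Then erfc(a) * erfc(b) = (1/π) * exp(-(a² + b²)) * ∫_{0}^{∞} exp(-t) * (a * √(t + a²) + b * √(t + b²)) / ((t + a² + b²) * √((t + a²) * (t + b²))) dt. -/
open MeasureTheory

/-- The error function: erf(z) = (2/√π) ∫_0^z exp(-u²) du. -/
noncomputable def erf (z : ℝ) : ℝ :=
  (2 / Real.sqrt Real.pi) * ∫ u in (0:ℝ)..z, Real.exp (-u ^ 2)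

/-- The complementary error function. -/
noncomputable def erfc (z : ℝ) : ℝ := 1 - erf z

/-!
Splitting the integrand, each half has the form `e^{-t} c / ((t + c² + d²) √(t + d²))`. The
substitution `t = s² - d²` turns its integral into `2 e^{d²} ∫_d^∞ e^{-s²} c / (s² + c²) ds`.
Writing `c / (s² + c²) = c e^{c²} ∫_1^∞ e^{-(s² + c²) r} dr` and exchanging the integrals, the inner
Gaussian integral is an `erfc`, and the half becomes
`√π e^{c² + d²} ∫_1^∞ c e^{-c² r} erfc (d √r) / √r dr`. The two `r`-integrals obtained for
`(c, d) = (a, b)` and `(b, a)` add up to `√π erfc a erfc b`, since their integrands add up to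
`√π` times the derivative of `r ↦ -erfc (a √r) erfc (b √r)`, which vanishes at infinity.
-/

open Real Set Filter Topology

lemma integrable_exp_neg_sq : Integrable fun u : ℝ => exp (-u ^ 2) := by
  simpa using integrable_exp_neg_mul_sq one_pos

lemma integral_exp_neg_sq_Ioi_zero : ∫ u in Ioi (0 : ℝ), exp (-u ^ 2) = √π / 2 := by
  simpa using integral_gaussian_Ioi 1

lemma erfc_eq_integral_Ioi (c : ℝ) : erfc c = 2 / √π * ∫ u in Ioi c, exp (-u ^ 2) := by
  have hsplit := intervalIntegral.integral_interval_add_Ioi (a := 0) (b := c)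
    integrable_exp_neg_sq.integrableOn integrable_exp_neg_sq.integrableOn
  rw [integral_exp_neg_sq_Ioi_zero] at hsplit
  rw [erfc, erf, eq_sub_of_add_eq hsplit]
  field_simp
  ring

lemma erfc_nonneg (c : ℝ) : 0 ≤ erfc c := by
  rw [erfc_eq_integral_Ioi]
  exact mul_nonneg (by positivity) (setIntegral_nonneg measurableSet_Ioi fun u _ => (exp_pos _).le)

lemma erfc_le_one {c : ℝ} (hc : 0 ≤ c) : erfc c ≤ 1 := by
  have : 0 ≤ erf c :=
    mul_nonneg (by positivity) (intervalIntegral.integral_nonneg hc fun u _ => (exp_pos _).le)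
  rw [erfc]
  linarith

lemma hasDerivAt_erfc (x : ℝ) : HasDerivAt erfc (-(2 / √π * exp (-x ^ 2))) x := by
  have hint : HasDerivAt (fun z => ∫ u in (0 : ℝ)..z, exp (-u ^ 2)) (exp (-x ^ 2)) x :=
    intervalIntegral.integral_hasDerivAt_right integrable_exp_neg_sq.intervalIntegrable
      integrable_exp_neg_sq.aestronglyMeasurable.stronglyMeasurableAtFilter
      (by fun_prop)
  exact (hint.const_mul (2 / √π)).const_sub 1

lemma continuous_erfc : Continuous erfc :=
  continuous_iff_continuousAt.2 fun x => (hasDerivAt_erfc x).continuousAt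

lemma tendsto_erfc_atTop : Tendsto erfc atTop (𝓝 0) := by
  have h := intervalIntegral_tendsto_integral_Ioi 0 integrable_exp_neg_sq.integrableOn tendsto_id
  rw [integral_exp_neg_sq_Ioi_zero] at h
  have herf : Tendsto erf atTop (𝓝 (2 / √π * (√π / 2))) := h.const_mul (2 / √π)
  have : 2 / √π * (√π / 2) = 1 := by field_simp
  rw [this] at herf
  rw [← sub_self 1]
  exact herf.const_sub 1

lemma hasDerivAt_erfc_mul_sqrt (c : ℝ) {r : ℝ} (hr : 0 < r) :
    HasDerivAt (fun r => erfc (c * √r)) (-(c * exp (-c ^ 2 * r) / (√π * √r))) r := by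
  refine ((hasDerivAt_erfc (c * √r)).comp r
    ((hasDerivAt_sqrt hr.ne').const_mul c)).congr_deriv ?_
  rw [mul_pow, sq_sqrt hr.le]
  field_simp

lemma integral_exp_neg_mul_sq_Ioi {r : ℝ} (hr : 0 < r) (d : ℝ) :
    ∫ s in Ioi d, exp (-r * s ^ 2) = √π / (2 * √r) * erfc (d * √r) := by
  have hsr : 0 < √r := sqrt_pos.2 hr
  have h := integral_comp_mul_left_Ioi (fun u => exp (-u ^ 2)) d hsr
  simp only [mul_pow, sq_sqrt hr.le, smul_eq_mul, ← neg_mul] at h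
  rw [h, erfc_eq_integral_Ioi, mul_comm d]
  field_simp

noncomputable def erfcKernel (c d r : ℝ) : ℝ := c * exp (-c ^ 2 * r) * erfc (d * √r) / √r

lemma erfcKernel_nonneg {c : ℝ} (hc : 0 ≤ c) (d r : ℝ) : 0 ≤ erfcKernel c d r := by
  unfold erfcKernel
  have := erfc_nonneg (d * √r)
  positivity

lemma integrableOn_erfcKernel {c d : ℝ} (hc : 0 < c) (hd : 0 ≤ d) :
    IntegrableOn (erfcKernel c d) (Ioi 1) := by
  have hmeas : Measurable (erfcKernel c d) := by
    unfold erfcKernel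
    have := continuous_erfc.measurable
    fun_prop
  refine ((exp_neg_integrableOn_Ioi 1 (pow_pos hc 2)).const_mul c).mono'
    hmeas.aestronglyMeasurable ?_
  filter_upwards [ae_restrict_mem measurableSet_Ioi] with r (hr : 1 < r)
  rw [norm_of_nonneg (erfcKernel_nonneg hc.le d r), erfcKernel,
    div_le_iff₀ (sqrt_pos.2 (one_pos.trans hr))]
  calc c * exp (-c ^ 2 * r) * erfc (d * √r) ≤ c * exp (-c ^ 2 * r) * 1 := by
        gcongr
        exact erfc_le_one (by positivity)
    _ ≤ c * exp (-c ^ 2 * r) * √r := by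
        gcongr
        exact one_le_sqrt.2 hr.le

lemma erfc_mul_erfc_eq_integral_erfcKernel {a b : ℝ} (ha : 0 < a) (hb : 0 < b) :
    erfc a * erfc b =
      ((∫ r in Ioi 1, erfcKernel a b r) + ∫ r in Ioi 1, erfcKernel b a r) / √π := by
  have hderiv : ∀ r ∈ Ici (1 : ℝ), HasDerivAt (fun r => -(erfc (a * √r) * erfc (b * √r)))
      ((erfcKernel a b r + erfcKernel b a r) / √π) r := by
    intro r hr
    have hr0 : 0 < r := one_pos.trans_le hr
    refine ((hasDerivAt_erfc_mul_sqrt a hr0).mul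
      (hasDerivAt_erfc_mul_sqrt b hr0)).neg.congr_deriv ?_
    simp only [erfcKernel]
    ring
  have hlim : Tendsto (fun r => -(erfc (a * √r) * erfc (b * √r))) atTop (𝓝 0) := by
    have h {c : ℝ} (hc : 0 < c) : Tendsto (fun r => erfc (c * √r)) atTop (𝓝 0) :=
      tendsto_erfc_atTop.comp ((tendsto_const_mul_atTop_of_pos hc).2 tendsto_sqrt_atTop)
    simpa using ((h ha).mul (h hb)).neg
  have hftc := integral_Ioi_of_hasDerivAt_of_nonneg' hderiv
    (fun r _ => div_nonneg (add_nonneg (erfcKernel_nonneg ha.le b r)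
      (erfcKernel_nonneg hb.le a r)) (sqrt_nonneg π)) hlim
  rw [integral_div, integral_add (integrableOn_erfcKernel ha hb.le)
    (integrableOn_erfcKernel hb ha.le)] at hftc
  rw [hftc, sqrt_one, mul_one, mul_one, zero_sub, neg_neg]

lemma integrable_exp_neg_sq_mul_div {c : ℝ} (hc : 0 < c) :
    Integrable fun s : ℝ => exp (-s ^ 2) * (c / (s ^ 2 + c ^ 2)) := by
  refine integrable_exp_neg_sq.mul_bdd (c := c⁻¹)
    (by fun_prop : Measurable _).aestronglyMeasurable (ae_of_all _ fun s => ?_)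
  rw [norm_of_nonneg (by positivity), div_le_iff₀ (by positivity)]
  field_simp
  nlinarith [sq_nonneg s]

lemma integral_Ioi_exp_neg_sq_mul_div {c : ℝ} (hc : 0 < c) (d : ℝ) :
    ∫ s in Ioi d, exp (-s ^ 2) * (c / (s ^ 2 + c ^ 2)) =
      √π / 2 * exp (c ^ 2) * ∫ r in Ioi 1, erfcKernel c d r := by
  set F : ℝ → ℝ → ℝ := fun s r => c * exp (c ^ 2) * exp (-(s ^ 2 + c ^ 2) * r)
  have hF_dr : ∀ s, ∫ r in Ioi 1, F s r = exp (-s ^ 2) * (c / (s ^ 2 + c ^ 2)) := by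
    intro s
    have hk : 0 < s ^ 2 + c ^ 2 := by positivity
    have hexp : exp (c ^ 2) * exp (-(s ^ 2 + c ^ 2) * 1) = exp (-s ^ 2) := by
      rw [← exp_add]
      ring_nf
    rw [integral_const_mul, integral_exp_mul_Ioi (by linarith), mul_assoc, neg_div_neg_eq,
      ← mul_div_assoc, hexp]
    ring
  have hF_ds : ∀ r ∈ Ioi (1 : ℝ),
      ∫ s in Ioi d, F s r = √π / 2 * exp (c ^ 2) * erfcKernel c d r := by
    intro r (hr : 1 < r)
    have hsplit : ∀ s, F s r = c * exp (c ^ 2) * exp (-c ^ 2 * r) * exp (-r * s ^ 2) := by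
      intro s
      simp only [F, mul_assoc, ← exp_add]
      ring_nf
    simp_rw [hsplit]
    rw [integral_const_mul, integral_exp_neg_mul_sq_Ioi (one_pos.trans hr), erfcKernel]
    field_simp
  have hF_int : Integrable (Function.uncurry F)
      ((volume.restrict (Ioi d)).prod (volume.restrict (Ioi 1))) := by
    rw [integrable_prod_iff (by fun_prop)]
    refine ⟨ae_of_all _ fun s => ?_, ?_⟩ <;> simp only [Function.uncurry_apply_pair]
    · exact (exp_neg_integrableOn_Ioi 1 (by positivity)).const_mul _
    · simp_rw [fun s r => norm_of_nonneg (show 0 ≤ F s r by positivity), hF_dr]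
      exact (integrable_exp_neg_sq_mul_div hc).integrableOn
  calc ∫ s in Ioi d, exp (-s ^ 2) * (c / (s ^ 2 + c ^ 2))
      = ∫ s in Ioi d, ∫ r in Ioi 1, F s r := by simp_rw [hF_dr]
    _ = ∫ r in Ioi 1, ∫ s in Ioi d, F s r := integral_integral_swap hF_int
    _ = ∫ r in Ioi 1, √π / 2 * exp (c ^ 2) * erfcKernel c d r :=
        setIntegral_congr_fun measurableSet_Ioi hF_ds
    _ = _ := integral_const_mul _ _

section SqSubSq

variable {E : Type*} [NormedAddCommGroup E] [NormedSpace ℝ E] {d : ℝ}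

lemma image_sq_sub_sq_Ioi (hd : 0 ≤ d) : (fun s : ℝ => s ^ 2 - d ^ 2) '' Ioi d = Ioi 0 := by
  ext t
  constructor
  · rintro ⟨s, hs : d < s, rfl⟩
    show 0 < s ^ 2 - d ^ 2
    nlinarith
  · intro (ht : 0 < t)
    refine ⟨√(t + d ^ 2), ?_, ?_⟩
    · show d < √(t + d ^ 2)
      rw [lt_sqrt hd]
      linarith
    · simp only
      rw [sq_sqrt (by positivity)]
      ring

lemma monotoneOn_sq_sub_sq_Ioi (hd : 0 ≤ d) : MonotoneOn (fun s : ℝ => s ^ 2 - d ^ 2) (Ioi d) :=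
  fun x (hx : d < x) y _ hxy => by
    simp only
    gcongr
    linarith

lemma hasDerivWithinAt_sq_sub_sq (s : ℝ) :
    HasDerivWithinAt (fun s : ℝ => s ^ 2 - d ^ 2) (2 * s) (Ioi d) s := by
  simpa using ((hasDerivAt_pow 2 s).sub_const (d ^ 2)).hasDerivWithinAt

lemma integrableOn_Ioi_zero_iff_sq_sub_sq (hd : 0 ≤ d) (g : ℝ → E) :
    IntegrableOn g (Ioi 0) ↔ IntegrableOn (fun s => (2 * s) • g (s ^ 2 - d ^ 2)) (Ioi d) := by
  rw [← image_sq_sub_sq_Ioi hd]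
  exact integrableOn_image_iff_integrableOn_deriv_smul_of_monotoneOn measurableSet_Ioi
    (fun s _ => hasDerivWithinAt_sq_sub_sq s) (monotoneOn_sq_sub_sq_Ioi hd) g

lemma integral_Ioi_zero_eq_sq_sub_sq (hd : 0 ≤ d) (g : ℝ → E) :
    ∫ t in Ioi 0, g t = ∫ s in Ioi d, (2 * s) • g (s ^ 2 - d ^ 2) := by
  rw [← image_sq_sub_sq_Ioi hd]
  exact integral_image_eq_integral_deriv_smul_of_monotoneOn measurableSet_Ioi
    (fun s _ => hasDerivWithinAt_sq_sub_sq s) (monotoneOn_sq_sub_sq_Ioi hd) g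

end SqSubSq

lemma smul_exp_neg_mul_div_sqrt_sq_sub_sq {c d s : ℝ} (hc : 0 < c) (hs : 0 < s) :
    (2 * s) • (exp (-(s ^ 2 - d ^ 2)) *
        (c / ((s ^ 2 - d ^ 2 + c ^ 2 + d ^ 2) * √(s ^ 2 - d ^ 2 + d ^ 2)))) =
      2 * exp (d ^ 2) * (exp (-s ^ 2) * (c / (s ^ 2 + c ^ 2))) := by
  have hden : s ^ 2 - d ^ 2 + c ^ 2 + d ^ 2 = s ^ 2 + c ^ 2 := by ring
  rw [hden, sub_add_cancel, sqrt_sq hs.le, neg_sub, sub_eq_add_neg, exp_add, smul_eq_mul]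
  field_simp

lemma integrableOn_exp_neg_mul_div_sqrt {c d : ℝ} (hc : 0 < c) (hd : 0 ≤ d) :
    IntegrableOn (fun t => exp (-t) * (c / ((t + c ^ 2 + d ^ 2) * √(t + d ^ 2)))) (Ioi 0) := by
  rw [integrableOn_Ioi_zero_iff_sq_sub_sq hd, integrableOn_congr_fun
    (fun s (hs : s ∈ Ioi d) => smul_exp_neg_mul_div_sqrt_sq_sub_sq hc (hd.trans_lt hs))
    measurableSet_Ioi]
  exact ((integrable_exp_neg_sq_mul_div hc).const_mul _).integrableOn

lemma integral_exp_neg_mul_div_sqrt {c d : ℝ} (hc : 0 < c) (hd : 0 ≤ d) :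
    ∫ t in Ioi 0, exp (-t) * (c / ((t + c ^ 2 + d ^ 2) * √(t + d ^ 2))) =
      √π * exp (c ^ 2 + d ^ 2) * ∫ r in Ioi 1, erfcKernel c d r := by
  rw [integral_Ioi_zero_eq_sq_sub_sq hd, setIntegral_congr_fun measurableSet_Ioi
    (fun s (hs : s ∈ Ioi d) => smul_exp_neg_mul_div_sqrt_sq_sub_sq hc (hd.trans_lt hs)),
    integral_const_mul, integral_Ioi_exp_neg_sq_mul_div hc, exp_add]
  ring

lemma add_mul_sqrt_div_mul_sqrt_mul {u v : ℝ} (hu : 0 < u) (hv : 0 < v) (a b w : ℝ) :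
    (a * √u + b * √v) / (w * √(u * v)) = a / (w * √v) + b / (w * √u) := by
  rcases eq_or_ne w 0 with rfl | hw
  · simp
  have := sqrt_pos.2 hu
  have := sqrt_pos.2 hv
  rw [sqrt_mul hu.le]
  field_simp

theorem stmt_3 (a b : ℝ) (ha : 0 < a) (hb : 0 < b) :
    erfc a * erfc b =
      (1 / Real.pi) * Real.exp (-(a ^ 2 + b ^ 2)) *
        ∫ t in Set.Ioi (0:ℝ),
          Real.exp (-t) *
              (a * Real.sqrt (t + a ^ 2) + b * Real.sqrt (t + b ^ 2)) /
            ((t + a ^ 2 + b ^ 2) * Real.sqrt ((t + a ^ 2) * (t + b ^ 2))) := by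
  have hsplit : ∀ t ∈ Ioi (0 : ℝ),
      exp (-t) * (a * √(t + a ^ 2) + b * √(t + b ^ 2)) /
          ((t + a ^ 2 + b ^ 2) * √((t + a ^ 2) * (t + b ^ 2))) =
        exp (-t) * (a / ((t + a ^ 2 + b ^ 2) * √(t + b ^ 2))) +
          exp (-t) * (b / ((t + b ^ 2 + a ^ 2) * √(t + a ^ 2))) := fun t (ht : 0 < t) => by
    rw [mul_div_assoc, add_mul_sqrt_div_mul_sqrt_mul (by positivity) (by positivity), mul_add,
      add_right_comm t (b ^ 2)]
  rw [setIntegral_congr_fun measurableSet_Ioi hsplit,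
    integral_add (integrableOn_exp_neg_mul_div_sqrt ha hb.le)
      (integrableOn_exp_neg_mul_div_sqrt hb ha.le),
    integral_exp_neg_mul_div_sqrt ha hb.le, integral_exp_neg_mul_div_sqrt hb ha.le,
    erfc_mul_erfc_eq_integral_erfcKernel ha hb, add_comm (b ^ 2), exp_neg]
  field_simp
  rw [sq_sqrt pi_pos.le]
end

section
/- Let a, b be real numbers with a > 0 and b > 0. Then 1 − erf(a) * erf(b) = (b/π) * exp(-b²) * ∫_{0}^{∞} exp(-t) * ( 1/((t + b²) * √t) − exp(-a²)/((t + a² + b²) * √(t + a²)) ) dt + (a/π) * exp(-a²) * ∫_{0}^{b²} exp(-t) / ((t + a²) * √t) dt. -/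
open MeasureTheory

/-!
Put `T(x, λ) = ∫₀^λ exp (-x² (1 + s²)) / (1 + s²) ds`. Differentiating under the integral
sign and substituting `u = x s` gives `∂ₓ T(x, λ) = -√π exp (-x²) erf (λ x)`, so
`T(x, λ) + T(λ x, 1/λ) + (π/2) erf x erf (λ x)` does not depend on `x`; at `x = 0` it equals
`arctan λ + arctan λ⁻¹ = π/2`. Taking `x = a`, `λ = b/a` expresses `1 - erf a erf b` through
`T(a, b/a)` and `T(b, a/b)`. The substitutions `s = w/x`, `w = √t` turn `T(x, y/x)` into
`(x/2) exp (-x²) ∫₀^{y²} exp (-t) / ((t + x²) √t) dt`, and the improper integral of the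
statement is `∫₀^∞ - ∫_{a²}^∞` of this integrand, i.e. `∫₀^{a²}`.
-/

open Real Set intervalIntegral

lemma integral_comp_sq {E : Type*} [NormedAddCommGroup E] [NormedSpace ℝ E] {c : ℝ}
    (hc : 0 ≤ c) (g : ℝ → E) :
    ∫ x in 0..c, (2 * x) • g (x ^ 2) = ∫ y in 0..c ^ 2, g y := by
  have hmono : StrictMonoOn (fun x : ℝ => x ^ 2) (Icc 0 c) :=
    (pow_left_strictMonoOn₀ two_ne_zero).mono fun x hx => hx.1
  have himage : (fun x : ℝ => x ^ 2) '' Ioc 0 c = Ioc 0 (c ^ 2) := by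
    simpa using (continuous_pow 2).continuousOn.image_Ioc_of_strictMonoOn hc hmono
  rw [integral_of_le hc, integral_of_le (sq_nonneg c), ← himage,
    integral_image_eq_integral_abs_deriv_smul measurableSet_Ioc
      (fun x _ => (hasDerivAt_pow 2 x).hasDerivWithinAt) (hmono.injOn.mono Ioc_subset_Icc_self)]
  refine setIntegral_congr_fun measurableSet_Ioc fun x hx => ?_
  simp [abs_of_pos hx.1]

lemma integral_Ioi_comp_add_right {E : Type*} [NormedAddCommGroup E] [NormedSpace ℝ E]
    (g : ℝ → E) (a c : ℝ) : ∫ t in Ioi a, g (t + c) = ∫ t in Ioi (a + c), g t := by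
  have h := (measurePreserving_add_right volume c).setIntegral_preimage_emb
    (measurableEmbedding_addRight c) g (Ioi (a + c))
  rwa [preimage_add_const_Ioi, add_sub_cancel_right] at h

lemma integral_Ioi_sub_comp_add_right {E : Type*} [NormedAddCommGroup E] [NormedSpace ℝ E]
    {g : ℝ → E} {a : ℝ} (hg : IntegrableOn g (Ioi a)) {c : ℝ} (hc : 0 ≤ c) :
    ∫ t in Ioi a, (g t - g (t + c)) = ∫ t in a..a + c, g t := by
  have hshift : IntegrableOn (fun t => g (t + c)) (Ioi a) := by
    have h := (measurePreserving_add_right volume c).integrableOn_comp_preimage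
      (measurableEmbedding_addRight c) (f := g) (s := Ioi (a + c))
    rw [preimage_add_const_Ioi, add_sub_cancel_right] at h
    exact h.2 (hg.mono_set (Ioi_subset_Ioi (le_add_of_nonneg_right hc)))
  rw [integral_sub hg hshift, integral_Ioi_comp_add_right,
    integral_Ioi_sub_Ioi hg (le_add_of_nonneg_right hc)]

lemma integrableOn_exp_neg_div_add_mul_sqrt {c : ℝ} (hc : 0 < c) :
    IntegrableOn (fun t => exp (-t) / ((t + c) * √t)) (Ioi 0) := by
  refine ((GammaIntegral_convergent one_half_pos).const_mul c⁻¹).mono' ?_ ?_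
  · refine ContinuousOn.aestronglyMeasurable ?_ measurableSet_Ioi
    exact ContinuousOn.div (by fun_prop) (by fun_prop) fun t ht => by
      have ht : 0 < t := ht
      have := sqrt_pos.2 ht
      positivity
  · filter_upwards [ae_restrict_mem measurableSet_Ioi] with t ht
    have ht : 0 < t := ht
    have hsqrt : t ^ ((1:ℝ) / 2 - 1) = (√t)⁻¹ := by
      rw [show (1:ℝ) / 2 - 1 = -(1 / 2) by norm_num, rpow_neg ht.le, ← sqrt_eq_rpow]
    have := sqrt_pos.2 ht
    rw [norm_of_nonneg (by positivity), hsqrt, div_eq_mul_inv, mul_inv, mul_left_comm]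
    gcongr
    linarith

lemma hasDerivAt_erf (x : ℝ) : HasDerivAt erf (2 / √π * exp (-x ^ 2)) x := by
  have hc : Continuous fun u : ℝ => exp (-u ^ 2) := by fun_prop
  exact (integral_hasDerivAt_right (hc.intervalIntegrable _ _)
    (hc.stronglyMeasurableAtFilter _ _) hc.continuousAt).const_mul _

lemma erf_mul_eq_mul_integral (x l : ℝ) :
    erf (x * l) = 2 / √π * (x * ∫ s in (0:ℝ)..l, exp (-(x * s) ^ 2)) := by
  have h := smul_integral_comp_mul_left (a := 0) (b := l) (fun u => exp (-u ^ 2)) x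
  rw [smul_eq_mul, mul_zero] at h
  rw [erf, h]

lemma erf_zero : erf 0 = 0 := by simp [erf]

-- Owen's T-function up to normalisation: `T(h, λ) = owenT (h / √2) λ / (2π)`.
noncomputable def owenT (x l : ℝ) : ℝ :=
  ∫ s in (0:ℝ)..l, exp (-x ^ 2 * (1 + s ^ 2)) / (1 + s ^ 2)

lemma owenT_zero_left (l : ℝ) : owenT 0 l = arctan l := by
  simp [owenT]

lemma hasDerivAt_owenT (l x : ℝ) :
    HasDerivAt (fun y => owenT y l) (-(√π * exp (-x ^ 2) * erf (x * l))) x := by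
  have hF : ∀ y s : ℝ, HasDerivAt (fun y => exp (-y ^ 2 * (1 + s ^ 2)) / (1 + s ^ 2))
      (-2 * y * exp (-y ^ 2 * (1 + s ^ 2))) y := by
    intro y s
    have h : HasDerivAt (fun y => -y ^ 2 * (1 + s ^ 2)) (-(2 * y) * (1 + s ^ 2)) y := by
      simpa using (hasDerivAt_pow 2 y).neg.mul_const (1 + s ^ 2)
    exact (h.exp.div_const _).congr_deriv (by field_simp)
  have hcont : ∀ y, Continuous fun s : ℝ => exp (-y ^ 2 * (1 + s ^ 2)) / (1 + s ^ 2) :=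
    fun y => .div (by fun_prop) (by fun_prop) fun s => by positivity
  have key := hasDerivAt_integral_of_dominated_loc_of_deriv_le (a := 0) (b := l) (μ := volume)
    (F' := fun y s => -2 * y * exp (-y ^ 2 * (1 + s ^ 2))) (bound := fun _ => 2 * (|x| + 1))
    (Metric.ball_mem_nhds x one_pos) (.of_forall fun y => (hcont y).aestronglyMeasurable)
    ((hcont x).intervalIntegrable _ _) (by fun_prop) ?_ intervalIntegrable_const
    (.of_forall fun s _ y _ => hF y s)
  · refine key.2.congr_deriv ?_
    have hsplit : ∀ s, -2 * x * exp (-x ^ 2 * (1 + s ^ 2))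
        = -2 * exp (-x ^ 2) * exp (-(x * s) ^ 2) * x := by
      intro s
      rw [show -x ^ 2 * (1 + s ^ 2) = -x ^ 2 + -(x * s) ^ 2 by ring, exp_add]
      ring
    rw [integral_congr fun s _ => hsplit s, intervalIntegral.integral_mul_const,
      intervalIntegral.integral_const_mul, erf_mul_eq_mul_integral]
    field_simp
  · refine .of_forall fun s _ y hy => ?_
    have hy : |y| ≤ |x| + 1 := by
      have := abs_sub_abs_le_abs_sub y x
      rw [Metric.mem_ball, dist_eq_norm, norm_eq_abs] at hy
      linarith
    have h1 : exp (-y ^ 2 * (1 + s ^ 2)) ≤ 1 :=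
      exp_le_one_iff.mpr (by nlinarith [sq_nonneg y, sq_nonneg s])
    rw [norm_mul, norm_mul, norm_of_nonneg (exp_pos _).le]
    simp only [norm_neg, Real.norm_ofNat, norm_eq_abs]
    nlinarith [abs_nonneg y, exp_pos (-y ^ 2 * (1 + s ^ 2))]

lemma owenT_add_owenT_inv {l : ℝ} (hl : 0 < l) (x : ℝ) :
    owenT x l + owenT (x * l) l⁻¹ = π / 2 * (1 - erf x * erf (x * l)) := by
  let F := fun x => owenT x l + owenT (x * l) l⁻¹ + π / 2 * (erf x * erf (x * l))
  have hF : ∀ x, HasDerivAt F 0 x := by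
    intro x
    have h₁ := hasDerivAt_owenT l x
    have h₂ := (hasDerivAt_owenT l⁻¹ (x * l)).comp x (hasDerivAt_mul_const l)
    have h₃ := (hasDerivAt_erf x).mul ((hasDerivAt_erf (x * l)).comp x (hasDerivAt_mul_const l))
    refine ((h₁.add h₂).add (h₃.const_mul (π / 2))).congr_deriv ?_
    simp only [Function.comp_apply, mul_inv_cancel_right₀ hl.ne']
    field_simp
    rw [sq_sqrt pi_pos.le]
    ring
  have hF0 : F 0 = π / 2 := by
    simp only [F, zero_mul, owenT_zero_left, erf_zero, mul_zero, add_zero, arctan_inv_of_pos hl]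
    ring
  have hconst := is_const_of_deriv_eq_zero (fun x => (hF x).differentiableAt)
    (fun x => (hF x).deriv) x 0
  simp only [hF0, F] at hconst
  linarith

lemma one_sub_erf_mul_erf {a b : ℝ} (ha : 0 < a) (hb : 0 < b) :
    1 - erf a * erf b = 2 / π * (owenT a (b / a) + owenT b (a / b)) := by
  have h := owenT_add_owenT_inv (div_pos hb ha) a
  rw [mul_div_cancel₀ b ha.ne', inv_div] at h
  rw [h]
  field_simp

lemma owenT_div_eq_integral {x : ℝ} (hx : 0 < x) {y : ℝ} (hy : 0 ≤ y) :
    owenT x (y / x) =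
      x / 2 * exp (-x ^ 2) * ∫ t in 0..y ^ 2, exp (-t) / ((t + x ^ 2) * √t) := by
  have hrescale :
      owenT x (y / x) = x * exp (-x ^ 2) * ∫ w in 0..y, exp (-w ^ 2) / (w ^ 2 + x ^ 2) := by
    have h := integral_comp_div (a := 0) (b := y)
      (fun s => exp (-x ^ 2 * (1 + s ^ 2)) / (1 + s ^ 2)) hx.ne'
    rw [zero_div, smul_eq_mul] at h
    rw [owenT, ← mul_right_inj' hx.ne', ← h, ← intervalIntegral.integral_const_mul,
      ← intervalIntegral.integral_const_mul]
    refine intervalIntegral.integral_congr fun w _ => ?_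
    rw [show -x ^ 2 * (1 + (w / x) ^ 2) = -x ^ 2 + -w ^ 2 by field_simp; ring, exp_add]
    field_simp
    ring
  have hsubst : ∫ t in 0..y ^ 2, exp (-t) / ((t + x ^ 2) * √t)
      = 2 * ∫ w in 0..y, exp (-w ^ 2) / (w ^ 2 + x ^ 2) := by
    rw [← integral_comp_sq (E := ℝ) hy, ← intervalIntegral.integral_const_mul]
    refine integral_congr_ae (.of_forall fun w hw => ?_)
    rw [uIoc_of_le hy] at hw
    have := hw.1.ne'
    rw [smul_eq_mul, sqrt_sq hw.1.le]
    field_simp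
  rw [hrescale, hsubst]
  ring

theorem stmt_5 (a b : ℝ) (ha : 0 < a) (hb : 0 < b) :
    1 - erf a * erf b =
      (b / Real.pi) * Real.exp (-b ^ 2) *
          (∫ t in Set.Ioi (0:ℝ),
            Real.exp (-t) *
              (1 / ((t + b ^ 2) * Real.sqrt t) -
                Real.exp (-a ^ 2) / ((t + a ^ 2 + b ^ 2) * Real.sqrt (t + a ^ 2)))) +
        (a / Real.pi) * Real.exp (-a ^ 2) *
          (∫ t in (0:ℝ)..b ^ 2, Real.exp (-t) / ((t + a ^ 2) * Real.sqrt t)) := by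
  have htail : ∫ t in Ioi (0:ℝ), exp (-t) * (1 / ((t + b ^ 2) * √t) -
        exp (-a ^ 2) / ((t + a ^ 2 + b ^ 2) * √(t + a ^ 2)))
      = ∫ t in 0..a ^ 2, exp (-t) / ((t + b ^ 2) * √t) := by
    have h := integral_Ioi_sub_comp_add_right
      (integrableOn_exp_neg_div_add_mul_sqrt (pow_pos hb 2)) (sq_nonneg a)
    rw [zero_add] at h
    rw [← h]
    refine setIntegral_congr_fun measurableSet_Ioi fun t _ => ?_
    rw [neg_add, exp_add]
    ring
  rw [htail, one_sub_erf_mul_erf ha hb, owenT_div_eq_integral hb ha.le,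
    owenT_div_eq_integral ha hb.le]
  ring
end

section
/- Let a be a real number with a > 0. Then 1 − (erf(a))² = (2a/π) * exp(-a²) * ∫_{0}^{a²} exp(-t) / ((t + a²) * √t) dt. -/
open MeasureTheory

/-! With `I x = ∫₀ˣ exp (-u²)` and `G x = ∫₀¹ exp (-x² (1 + s²)) / (1 + s²) ds`, differentiation
under the integral sign and the substitution `u = x s` give `G' = -2 exp (-x²) I = -(I²)'`.
So `I² + G` is constant, equal to `G 0 = arctan 1 = π / 4`, i.e. `1 - erf² = (4 / π) G`.
The substitutions `t = u²` and `u = a s` turn the integral of the statement into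
`(2 / a) exp (a²) G a`. -/

open Real Set intervalIntegral

theorem hasDerivAt_intervalIntegral_of_continuous_deriv
    {E : Type*} [NormedAddCommGroup E] [NormedSpace ℝ E] {F F' : ℝ → ℝ → E} {a b x₀ : ℝ}
    (hF : ∀ x, Continuous (F x)) (hF' : Continuous (Function.uncurry F'))
    (hderiv : ∀ x t, HasDerivAt (fun x => F x t) (F' x t) x) :
    HasDerivAt (fun x => ∫ t in a..b, F x t) (∫ t in a..b, F' x₀ t) x₀ := by
  have hK : IsCompact (Metric.closedBall x₀ 1 ×ˢ uIcc a b) :=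
    (isCompact_closedBall x₀ 1).prod isCompact_uIcc
  obtain ⟨C, hC⟩ := hK.exists_bound_of_continuousOn hF'.continuousOn
  have hF'x₀ : Continuous (F' x₀) := hF'.comp (Continuous.prodMk_right x₀)
  refine (hasDerivAt_integral_of_dominated_loc_of_deriv_le (bound := fun _ => C)
    (Metric.ball_mem_nhds x₀ one_pos) (.of_forall fun x => (hF x).aestronglyMeasurable)
    ((hF x₀).intervalIntegrable a b) hF'x₀.aestronglyMeasurable ?_ intervalIntegrable_const
    (.of_forall fun t _ x _ => hderiv x t)).2
  exact .of_forall fun t ht x hx =>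
    hC (x, t) ⟨Metric.ball_subset_closedBall hx, uIoc_subset_uIcc ht⟩

theorem integral_two_mul_smul_comp_sq {E : Type*} [NormedAddCommGroup E] [NormedSpace ℝ E]
    (g : ℝ → E) {b : ℝ} (hb : 0 ≤ b) :
    ∫ u in 0..b, (2 * u) • g (u ^ 2) = ∫ t in 0..b ^ 2, g t := by
  have h := integral_Icc_deriv_smul_of_deriv_nonneg (f := fun u : ℝ => u ^ 2)
    (f' := fun u => 2 * u) (g := g) (continuous_pow 2).continuousOn
    (fun u _ => by simpa using hasDerivAt_pow 2 u) (fun u hu => by linarith [hu.1]) hb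
  rw [integral_of_le hb, integral_of_le (by positivity), ← integral_Icc_eq_integral_Ioc,
    ← integral_Icc_eq_integral_Ioc, h]
  simp

noncomputable def gaussArctanIntegral (x : ℝ) : ℝ :=
  ∫ s in (0:ℝ)..1, exp (-(x ^ 2 * (1 + s ^ 2))) / (1 + s ^ 2)

theorem gaussArctanIntegral_zero : gaussArctanIntegral 0 = π / 4 := by
  simp [gaussArctanIntegral, integral_inv_one_add_sq, arctan_one]

theorem hasDerivAt_gaussArctanIntegral (x : ℝ) :
    HasDerivAt gaussArctanIntegral (-2 * exp (-x ^ 2) * ∫ u in 0..x, exp (-u ^ 2)) x := by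
  have hderiv (y s : ℝ) : HasDerivAt (fun y => exp (-(y ^ 2 * (1 + s ^ 2))) / (1 + s ^ 2))
      (-2 * y * exp (-(y ^ 2 * (1 + s ^ 2)))) y := by
    have h : HasDerivAt (fun y : ℝ => -(y ^ 2 * (1 + s ^ 2))) (-(2 * y * (1 + s ^ 2))) y := by
      simpa using (((hasDerivAt_id y).pow 2).mul_const (1 + s ^ 2)).fun_neg
    refine (h.exp.div_const (1 + s ^ 2)).congr_deriv ?_
    field_simp
  refine (hasDerivAt_intervalIntegral_of_continuous_deriv
    (fun y => by fun_prop (disch := intro s; positivity)) (by fun_prop) hderiv).congr_deriv ?_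
  have hsplit (s : ℝ) : -2 * x * exp (-(x ^ 2 * (1 + s ^ 2)))
      = -2 * exp (-x ^ 2) * (x * exp (-(x * s) ^ 2)) := by
    rw [show -(x ^ 2 * (1 + s ^ 2)) = -x ^ 2 + -(x * s) ^ 2 by ring, exp_add]
    ring
  simp only [hsplit, intervalIntegral.integral_const_mul,
    mul_integral_comp_mul_left (f := fun u => exp (-u ^ 2)), mul_zero, mul_one]

theorem sq_integral_exp_neg_sq_add_gaussArctanIntegral (x : ℝ) :
    (∫ u in 0..x, exp (-u ^ 2)) ^ 2 + gaussArctanIntegral x = π / 4 := by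
  have hcont : Continuous fun u : ℝ => exp (-u ^ 2) := by fun_prop
  have hI (y : ℝ) : HasDerivAt (fun z => ∫ u in 0..z, exp (-u ^ 2)) (exp (-y ^ 2)) y :=
    integral_hasDerivAt_right (hcont.intervalIntegrable _ _)
      (hcont.stronglyMeasurableAtFilter _ _) hcont.continuousAt
  have hconst (y : ℝ) : HasDerivAt
      (fun z => (∫ u in 0..z, exp (-u ^ 2)) ^ 2 + gaussArctanIntegral z) 0 y := by
    refine (((hI y).pow 2).add (hasDerivAt_gaussArctanIntegral y)).congr_deriv ?_
    ring
  rw [is_const_of_deriv_eq_zero (fun y => (hconst y).differentiableAt)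
    (fun y => (hconst y).deriv) x 0]
  simp [gaussArctanIntegral_zero]

theorem one_sub_erf_sq (x : ℝ) : 1 - erf x ^ 2 = 4 / π * gaussArctanIntegral x := by
  have h := sq_integral_exp_neg_sq_add_gaussArctanIntegral x
  rw [erf, mul_pow, div_pow, sq_sqrt pi_pos.le]
  field_simp
  linarith

theorem integral_exp_neg_div_mul_sqrt {a : ℝ} (ha : 0 < a) :
    ∫ t in 0..a ^ 2, exp (-t) / ((t + a ^ 2) * √t) =
      2 / a * exp (a ^ 2) * gaussArctanIntegral a := by
  have hsq : ∫ u in 0..a, (2 * u) • (exp (-u ^ 2) / ((u ^ 2 + a ^ 2) * √(u ^ 2)))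
      = ∫ u in 0..a, 2 * exp (-u ^ 2) / (u ^ 2 + a ^ 2) := by
    refine integral_congr_ae (.of_forall fun u hu => ?_)
    rw [uIoc_of_le ha.le] at hu
    have hu0 : u ≠ 0 := hu.1.ne'
    rw [smul_eq_mul, sqrt_sq hu.1.le]
    field_simp
  have hscale := mul_integral_comp_mul_left (a := 0) (b := 1)
    (f := fun u => 2 * exp (-u ^ 2) / (u ^ 2 + a ^ 2)) a
  rw [mul_zero, mul_one] at hscale
  rw [← integral_two_mul_smul_comp_sq _ ha.le, hsq, ← hscale, gaussArctanIntegral,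
    ← intervalIntegral.integral_const_mul, ← intervalIntegral.integral_const_mul]
  refine integral_congr fun s _ => ?_
  rw [show -(a ^ 2 * (1 + s ^ 2)) = -a ^ 2 + -(a * s) ^ 2 by ring, exp_add, exp_neg (a ^ 2)]
  field_simp
  ring

theorem stmt_6 (a : ℝ) (ha : 0 < a) :
    1 - (erf a) ^ 2 =
      (2 * a / Real.pi) * Real.exp (-a ^ 2) *
        ∫ t in (0:ℝ)..a ^ 2, Real.exp (-t) / ((t + a ^ 2) * Real.sqrt t) := by
  rw [one_sub_erf_sq, integral_exp_neg_div_mul_sqrt ha, exp_neg]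
  field_simp
  ring
end

section
/- Let a be a real number with a > 0. Then 1 − (erf(a))² = (4/π) * exp(-a²) * ∫_{0}^{1} exp(-a² * s²) / (s² + 1) ds. -/
/-!
With `G t = ∫₀ᵗ e^{-u²} du`, the fundamental theorem of calculus and the substitution `u = t s` give
`G(a)² = ∫₀ᵃ 2 e^{-t²} G t dt = ∫₀ᵃ ∫₀¹ 2 t e^{-(1 + s²) t²} ds dt`.
After swapping the two integrals the inner one is elementary, `(1 - e^{-(1 + s²) a²}) / (1 + s²)`,
and `∫₀¹ 1 / (1 + s²) ds = π / 4`.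
-/

open MeasureTheory

open Real Set

theorem intervalIntegral_intervalIntegral_swap_of_continuous {E : Type*} [NormedAddCommGroup E]
    [NormedSpace ℝ E] [CompleteSpace E] {F : ℝ → ℝ → E}
    (hF : Continuous (Function.uncurry F)) (a b c d : ℝ) :
    ∫ x in a..b, ∫ y in c..d, F x y = ∫ y in c..d, ∫ x in a..b, F x y := by
  apply intervalIntegral_intervalIntegral_swap
  rw [Measure.volume_eq_prod]
  exact (hF.continuousOn.integrableOn_compact (isCompact_uIcc.prod isCompact_uIcc)).mono_set
    (prod_mono uIoc_subset_uIcc uIoc_subset_uIcc)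

theorem integral_mul_exp_neg_mul_sq {c : ℝ} (hc : c ≠ 0) (a : ℝ) :
    ∫ t in (0:ℝ)..a, 2 * t * exp (-c * t ^ 2) = (1 - exp (-c * a ^ 2)) / c := by
  have hderiv : ∀ t ∈ uIcc (0:ℝ) a,
      HasDerivAt (fun t ↦ -exp (-c * t ^ 2) / c) (2 * t * exp (-c * t ^ 2)) t := by
    intro t _
    refine (((hasDerivAt_pow 2 t).const_mul (-c)).exp.fun_neg.div_const c).congr_deriv ?_
    field_simp
    ring
  rw [intervalIntegral.integral_eq_sub_of_hasDerivAt hderiv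
    (by apply Continuous.intervalIntegrable; fun_prop)]
  simp only [ne_eq, OfNat.ofNat_ne_zero, not_false_eq_true, zero_pow, mul_zero, exp_zero]
  ring

noncomputable def gaussIntegral (t : ℝ) : ℝ := ∫ u in (0:ℝ)..t, exp (-u ^ 2)

theorem hasDerivAt_gaussIntegral (t : ℝ) : HasDerivAt gaussIntegral (exp (-t ^ 2)) t :=
  ((by fun_prop : Continuous fun u : ℝ ↦ exp (-u ^ 2)).integral_hasStrictDerivAt 0 t).hasDerivAt

@[fun_prop]
theorem continuous_gaussIntegral : Continuous gaussIntegral :=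
  continuous_iff_continuousAt.2 fun t ↦ (hasDerivAt_gaussIntegral t).continuousAt

theorem gaussIntegral_sq_eq_integral (a : ℝ) :
    gaussIntegral a ^ 2 = ∫ t in (0:ℝ)..a, 2 * exp (-t ^ 2) * gaussIntegral t := by
  have hderiv : ∀ t ∈ uIcc (0:ℝ) a, HasDerivAt (fun t ↦ gaussIntegral t ^ 2)
      (2 * exp (-t ^ 2) * gaussIntegral t) t := fun t _ ↦ by
    refine ((hasDerivAt_gaussIntegral t).fun_pow 2).congr_deriv ?_
    ring
  have hint : IntervalIntegrable (fun t ↦ 2 * exp (-t ^ 2) * gaussIntegral t) volume 0 a :=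
    (by fun_prop : Continuous fun t ↦ 2 * exp (-t ^ 2) * gaussIntegral t).intervalIntegrable _ _
  rw [intervalIntegral.integral_eq_sub_of_hasDerivAt hderiv hint]
  simp [gaussIntegral]

theorem integral_mul_exp_neg_one_add_sq_mul_sq (t : ℝ) :
    ∫ s in (0:ℝ)..1, 2 * t * exp (-(1 + s ^ 2) * t ^ 2) = 2 * exp (-t ^ 2) * gaussIntegral t := by
  have hsplit : ∀ s : ℝ,
      2 * t * exp (-(1 + s ^ 2) * t ^ 2) = 2 * exp (-t ^ 2) * (t * exp (-(t * s) ^ 2)) := by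
    intro s
    rw [show -(1 + s ^ 2) * t ^ 2 = -t ^ 2 + -(t * s) ^ 2 by ring, exp_add]
    ring
  simp_rw [hsplit]
  rw [intervalIntegral.integral_const_mul, intervalIntegral.integral_const_mul]
  congr 1
  rcases eq_or_ne t 0 with rfl | ht
  · simp [gaussIntegral]
  · rw [intervalIntegral.integral_comp_mul_left (fun u ↦ exp (-u ^ 2)) ht, mul_zero, mul_one,
      smul_eq_mul, mul_inv_cancel_left₀ ht, gaussIntegral]

theorem gaussIntegral_sq_eq_pi_div_four_sub (a : ℝ) :
    gaussIntegral a ^ 2 =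
      π / 4 - exp (-a ^ 2) * ∫ s in (0:ℝ)..1, exp (-a ^ 2 * s ^ 2) / (s ^ 2 + 1) := by
  have hinner : ∀ s : ℝ, ∫ t in (0:ℝ)..a, 2 * t * exp (-(1 + s ^ 2) * t ^ 2)
      = 1 / (1 + s ^ 2) - exp (-a ^ 2) * (exp (-a ^ 2 * s ^ 2) / (s ^ 2 + 1)) := by
    intro s
    have hs : 1 + s ^ 2 ≠ 0 := by positivity
    rw [integral_mul_exp_neg_mul_sq hs, show -(1 + s ^ 2) * a ^ 2 = -a ^ 2 + -a ^ 2 * s ^ 2 by ring,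
      exp_add]
    field_simp
    ring
  have hcont : Continuous fun s : ℝ ↦ exp (-a ^ 2 * s ^ 2) / (s ^ 2 + 1) :=
    by fun_prop (disch := intro; positivity)
  calc gaussIntegral a ^ 2
      = ∫ t in (0:ℝ)..a, ∫ s in (0:ℝ)..1, 2 * t * exp (-(1 + s ^ 2) * t ^ 2) := by
        simp_rw [gaussIntegral_sq_eq_integral, integral_mul_exp_neg_one_add_sq_mul_sq]
    _ = ∫ s in (0:ℝ)..1, ∫ t in (0:ℝ)..a, 2 * t * exp (-(1 + s ^ 2) * t ^ 2) :=
        intervalIntegral_intervalIntegral_swap_of_continuous (by fun_prop) _ _ _ _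
    _ = π / 4 - exp (-a ^ 2) * ∫ s in (0:ℝ)..1, exp (-a ^ 2 * s ^ 2) / (s ^ 2 + 1) := by
        simp_rw [hinner]
        rw [intervalIntegral.integral_sub, intervalIntegral.integral_const_mul,
          integral_one_div_one_add_sq, arctan_one, arctan_zero, sub_zero]
        · exact (by fun_prop (disch := intro; positivity) :
            Continuous fun s : ℝ ↦ 1 / (1 + s ^ 2)).intervalIntegrable _ _
        · exact (continuous_const.mul hcont).intervalIntegrable _ _

theorem stmt_7_general (a : ℝ) :
    1 - (erf a) ^ 2 =
      (4 / Real.pi) * Real.exp (-a ^ 2) *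
        ∫ s in (0:ℝ)..1, Real.exp (-a ^ 2 * s ^ 2) / (s ^ 2 + 1) := by
  have herf : erf a ^ 2 = 4 / π * gaussIntegral a ^ 2 := by
    rw [erf, mul_pow, div_pow, sq_sqrt pi_pos.le, gaussIntegral]
    norm_num
  rw [herf, gaussIntegral_sq_eq_pi_div_four_sub]
  field_simp
  ring

theorem stmt_7 (a : ℝ) (ha : 0 < a) :
    1 - (erf a) ^ 2 =
      (4 / Real.pi) * Real.exp (-a ^ 2) *
        ∫ s in (0:ℝ)..1, Real.exp (-a ^ 2 * s ^ 2) / (s ^ 2 + 1) :=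
  stmt_7_general a
end
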